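/- arXiv:1204.3251 — 2 statements merged into one kernel-verified Lean document; each statement's English description precedes it below -/
import Mathlib

section
/- Let (p₁, p₂, …) be a sequence in [0,1] that is stable: its empirical measures Pₙ = (1/n) ∑_{i=1}^n δ_{pᵢ} converge weakly to a probability measure P on [0,1] admitting a positive continuous density ρ. Let (fₙ) be betting functions consistent for this sequence, i.e., log fₙ(p) → log ρ(p) uniformly in p ∈ [0,1]. Then for every positive continuous betting function f on [0,1] (with ∫₀¹ f = 1), liminf_{n→∞} ( (1/n) ∑_{i=1}^n log fᵢ(pᵢ) − (1/n) ∑_{i=1}^n log f(pᵢ) ) ≥ 0. -/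
open MeasureTheory Real Filter

/-- If a sequence of p-values `(p₁, p₂, …)` in `[0,1]` is stable (its empirical measures
converge weakly to a probability measure with positive continuous density `ρ`) and the
betting functions `(fₙ)` are consistent for it (`log fₙ → log ρ` uniformly on `[0,1]`),
then for every positive continuous betting function `f`,
`liminf ( (1/n) ∑ log fᵢ(pᵢ) − (1/n) ∑ log f(pᵢ) ) ≥ 0`. -/
theorem stmt_7 (p : ℕ → ℝ) (hp : ∀ n, p n ∈ Set.Icc (0 : ℝ) 1)
    (ρ : ℝ → ℝ) (hρ_cont : ContinuousOn ρ (Set.Icc (0 : ℝ) 1))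
    (hρ_pos : ∀ x ∈ Set.Icc (0 : ℝ) 1, 0 < ρ x)
    (hρ_int : ∫ x in Set.Icc (0 : ℝ) 1, ρ x = 1)
    (hstable : ∀ g : ℝ → ℝ, Continuous g →
      Tendsto (fun n => (∑ i ∈ Finset.range n, g (p i)) / n) atTop
        (nhds (∫ x in Set.Icc (0 : ℝ) 1, g x * ρ x)))
    (f : ℕ → ℝ → ℝ)
    (hf_cont : ∀ n, ContinuousOn (f n) (Set.Icc (0 : ℝ) 1))
    (hf_pos : ∀ n, ∀ x ∈ Set.Icc (0 : ℝ) 1, 0 < f n x)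
    (hf_int : ∀ n, ∫ x in Set.Icc (0 : ℝ) 1, f n x = 1)
    (hconsistent : TendstoUniformlyOn (fun n x => log (f n x)) (fun x => log (ρ x)) atTop
      (Set.Icc (0 : ℝ) 1)) :
    ∀ g : ℝ → ℝ, ContinuousOn g (Set.Icc (0 : ℝ) 1) →
      (∀ x ∈ Set.Icc (0 : ℝ) 1, 0 < g x) →
      (∫ x in Set.Icc (0 : ℝ) 1, g x = 1) →
      0 ≤ liminf (fun n =>
          (∑ i ∈ Finset.range n, log (f i (p i))) / n -
            (∑ i ∈ Finset.range n, log (g (p i))) / n) atTop := by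
  intro g hg_cont hg_pos hg_int
  have hle : (0:ℝ) ≤ 1 := zero_le_one
  -- continuous functions on Icc
  have hlogρ : ContinuousOn (fun x => log (ρ x)) (Set.Icc (0:ℝ) 1) :=
    hρ_cont.log (fun x hx => (hρ_pos x hx).ne')
  have hlogg : ContinuousOn (fun x => log (g x)) (Set.Icc (0:ℝ) 1) :=
    hg_cont.log (fun x hx => (hg_pos x hx).ne')
  -- continuous extensions to ℝ
  set G₁ : ℝ → ℝ := Set.IccExtend hle ((Set.Icc (0:ℝ) 1).restrict fun x => log (ρ x)) with hG₁
  set G₂ : ℝ → ℝ := Set.IccExtend hle ((Set.Icc (0:ℝ) 1).restrict fun x => log (g x)) with hG₂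
  have hG₁c : Continuous G₁ := (continuousOn_iff_continuous_restrict.1 hlogρ).Icc_extend'
  have hG₂c : Continuous G₂ := (continuousOn_iff_continuous_restrict.1 hlogg).Icc_extend'
  have hG₁eq : ∀ x ∈ Set.Icc (0:ℝ) 1, G₁ x = log (ρ x) := by
    intro x hx
    simp [hG₁, Set.IccExtend_of_mem hle _ hx]; rfl
  have hG₂eq : ∀ x ∈ Set.Icc (0:ℝ) 1, G₂ x = log (g x) := by
    intro x hx
    simp [hG₂, Set.IccExtend_of_mem hle _ hx]; rfl
  have hI₁ : (∫ x in Set.Icc (0:ℝ) 1, G₁ x * ρ x) = ∫ x in Set.Icc (0:ℝ) 1, log (ρ x) * ρ x := by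
    apply setIntegral_congr_fun measurableSet_Icc
    intro x hx; simp [hG₁eq x hx]
  have hI₂ : (∫ x in Set.Icc (0:ℝ) 1, G₂ x * ρ x) = ∫ x in Set.Icc (0:ℝ) 1, log (g x) * ρ x := by
    apply setIntegral_congr_fun measurableSet_Icc
    intro x hx; simp [hG₂eq x hx]
  have h₁ := hstable G₁ hG₁c
  have h₂ := hstable G₂ hG₂c
  rw [hI₁] at h₁
  rw [hI₂] at h₂
  have hG₁p : ∀ i, G₁ (p i) = log (ρ (p i)) := fun i => hG₁eq _ (hp i)
  have hG₂p : ∀ i, G₂ (p i) = log (g (p i)) := fun i => hG₂eq _ (hp i)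
  -- Cesàro of the uniform-convergence error
  have herr : Tendsto (fun i => log (f i (p i)) - log (ρ (p i))) atTop (nhds 0) := by
    rw [Metric.tendsto_atTop]
    intro ε hε
    rcases (Metric.tendstoUniformlyOn_iff.1 hconsistent ε hε).exists_forall_of_atTop with ⟨N, hN⟩
    refine ⟨N, fun n hn => ?_⟩
    have := hN n hn (p n) (hp n)
    rw [Real.dist_eq] at this ⊢
    rw [sub_zero]
    rw [abs_sub_comm] at this
    exact this
  have hces : Tendsto (fun n => (∑ i ∈ Finset.range n,
      (log (f i (p i)) - log (ρ (p i)))) / n) atTop (nhds 0) := by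
    have := herr.cesaro
    simpa [div_eq_inv_mul] using this
  -- the full limit
  set L : ℝ := (∫ x in Set.Icc (0:ℝ) 1, log (ρ x) * ρ x) -
      ∫ x in Set.Icc (0:ℝ) 1, log (g x) * ρ x with hL
  have hlim : Tendsto (fun n =>
      (∑ i ∈ Finset.range n, log (f i (p i))) / n -
        (∑ i ∈ Finset.range n, log (g (p i))) / n) atTop (nhds L) := by
    have key : ∀ n : ℕ,
        (∑ i ∈ Finset.range n, log (f i (p i))) / n -
          (∑ i ∈ Finset.range n, log (g (p i))) / n =
        (∑ i ∈ Finset.range n, (log (f i (p i)) - log (ρ (p i)))) / n +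
          ((∑ i ∈ Finset.range n, G₁ (p i)) / n - (∑ i ∈ Finset.range n, G₂ (p i)) / n) := by
      intro n
      simp only [hG₁p, hG₂p, Finset.sum_sub_distrib, sub_div]
      ring
    simp only [key]
    have : (0:ℝ) + ((∫ x in Set.Icc (0:ℝ) 1, log (ρ x) * ρ x) -
        ∫ x in Set.Icc (0:ℝ) 1, log (g x) * ρ x) = L := by rw [hL]; ring
    rw [← this]
    exact hces.add (h₁.sub h₂)
  rw [hlim.liminf_eq]
  -- Gibbs' inequality: L ≥ 0
  have hint1 : IntegrableOn (fun x => log (g x) * ρ x) (Set.Icc (0:ℝ) 1) :=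
    (hlogg.mul hρ_cont).integrableOn_compact isCompact_Icc
  have hint2 : IntegrableOn (fun x => log (ρ x) * ρ x) (Set.Icc (0:ℝ) 1) :=
    (hlogρ.mul hρ_cont).integrableOn_compact isCompact_Icc
  have hintg : IntegrableOn g (Set.Icc (0:ℝ) 1) := hg_cont.integrableOn_compact isCompact_Icc
  have hintρ : IntegrableOn ρ (Set.Icc (0:ℝ) 1) := hρ_cont.integrableOn_compact isCompact_Icc
  have hbound : ∀ x ∈ Set.Icc (0:ℝ) 1,
      log (g x) * ρ x - log (ρ x) * ρ x ≤ g x - ρ x := by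
    intro x hx
    have hρx := hρ_pos x hx
    have hgx := hg_pos x hx
    have h1 : log (g x / ρ x) ≤ g x / ρ x - 1 :=
      Real.log_le_sub_one_of_pos (div_pos hgx hρx)
    have h2 : log (g x / ρ x) = log (g x) - log (ρ x) := Real.log_div hgx.ne' hρx.ne'
    rw [h2] at h1
    have := mul_le_mul_of_nonneg_right h1 hρx.le
    calc log (g x) * ρ x - log (ρ x) * ρ x = (log (g x) - log (ρ x)) * ρ x := by ring
      _ ≤ (g x / ρ x - 1) * ρ x := this
      _ = g x - ρ x := by field_simp
  have hmono : (∫ x in Set.Icc (0:ℝ) 1, (log (g x) * ρ x - log (ρ x) * ρ x)) ≤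
      ∫ x in Set.Icc (0:ℝ) 1, (g x - ρ x) := by
    apply setIntegral_mono_on (hint1.sub hint2) (hintg.sub hintρ) measurableSet_Icc
    exact hbound
  rw [integral_sub hint1 hint2, integral_sub hintg hintρ, hg_int, hρ_int] at hmono
  simp only [hL]
  linarith
end

section
/- Let α₁, …, αₙ be exchangeable real random variables and θ uniform on [0,1] independent of them. Define p = (#{i : αᵢ > αₙ} + θ·#{i : αᵢ = αₙ}) / n. Then for every t ∈ [0,1], P(p ≤ t) = t, i.e., the smoothed p-value is exactly uniformly distributed on [0,1]. -/
open MeasureTheory ProbabilityTheory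

namespace Stmt17Aux

variable {n : ℕ}

/-- number of strictly larger values -/
noncomputable def G (x : Fin (n+1) → ℝ) (i : Fin (n+1)) : ℕ :=
  (Finset.univ.filter fun j => x j > x i).card

/-- number of equal values -/
noncomputable def E (x : Fin (n+1) → ℝ) (i : Fin (n+1)) : ℕ :=
  (Finset.univ.filter fun j => x j = x i).card

/-- the conditional probability that the smoothed p-value at index `i` is `≤ s/(n+1)` -/
noncomputable def c (s : ℝ) (x : Fin (n+1) → ℝ) (i : Fin (n+1)) : ℝ :=
  min 1 (max 0 ((s - G x i) / E x i))

lemma c_nonneg (s : ℝ) (x : Fin (n+1) → ℝ) (i : Fin (n+1)) : 0 ≤ c s x i :=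
  le_min zero_le_one (le_max_left _ _)

lemma E_pos (x : Fin (n+1) → ℝ) (i : Fin (n+1)) : 0 < E x i :=
  Finset.card_pos.mpr ⟨i, by simp [E]⟩

lemma G_add_E (x : Fin (n+1) → ℝ) (i : Fin (n+1)) :
    G x i + E x i = (Finset.univ.filter fun j => x j ≥ x i).card := by
  classical
  rw [G, E, ← Finset.card_union_of_disjoint]
  · congr 1
    rw [← Finset.filter_or]
    apply Finset.filter_congr
    intro j _
    constructor
    · rintro (h | h)
      · exact le_of_lt h
      · exact le_of_eq h.symm
    · intro h; rcases lt_or_eq_of_le h with h' | h'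
      · exact Or.inl h'
      · exact Or.inr h'.symm
  · rw [Finset.disjoint_filter]
    intro j _ hj
    exact ne_of_gt hj

lemma G_add_E_le (x : Fin (n+1) → ℝ) (i : Fin (n+1)) :
    G x i + E x i ≤ n + 1 := by
  rw [G_add_E]
  calc (Finset.univ.filter fun j => x j ≥ x i).card ≤ Finset.univ.card :=
        Finset.card_filter_le _ _
    _ = n + 1 := by simp

lemma G_comp (x : Fin (n+1) → ℝ) (σ : Equiv.Perm (Fin (n+1))) (i : Fin (n+1)) :
    G (x ∘ σ) i = G x (σ i) := by
  rw [G, G]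
  apply Finset.card_bij (fun j _ => σ j)
  · intro j hj; simp only [Finset.mem_filter, Finset.mem_univ, true_and] at hj ⊢; exact hj
  · intro a _ b _ h; exact σ.injective h
  · intro b hb
    refine ⟨σ.symm b, ?_, by simp⟩
    simp only [Finset.mem_filter, Finset.mem_univ, true_and, Function.comp_apply,
      Equiv.apply_symm_apply] at hb ⊢
    exact hb

lemma E_comp (x : Fin (n+1) → ℝ) (σ : Equiv.Perm (Fin (n+1))) (i : Fin (n+1)) :
    E (x ∘ σ) i = E x (σ i) := by
  rw [E, E]
  apply Finset.card_bij (fun j _ => σ j)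
  · intro j hj; simp only [Finset.mem_filter, Finset.mem_univ, true_and] at hj ⊢; exact hj
  · intro a _ b _ h; exact σ.injective h
  · intro b hb
    refine ⟨σ.symm b, ?_, by simp⟩
    simp only [Finset.mem_filter, Finset.mem_univ, true_and, Function.comp_apply,
      Equiv.apply_symm_apply] at hb ⊢
    exact hb

lemma c_comp (s : ℝ) (x : Fin (n+1) → ℝ) (σ : Equiv.Perm (Fin (n+1))) (i : Fin (n+1)) :
    c s (x ∘ σ) i = c s x (σ i) := by
  rw [c, c, G_comp, E_comp]

lemma measurable_G_real (i : Fin (n+1)) :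
    Measurable (fun x : Fin (n+1) → ℝ => (G x i : ℝ)) := by
  have : (fun x : Fin (n+1) → ℝ => (G x i : ℝ)) =
      fun x => ∑ j : Fin (n+1), if x j > x i then (1:ℝ) else 0 := by
    funext x
    rw [G, Finset.card_filter]
    push_cast
    rfl
  rw [this]
  apply Finset.measurable_sum
  intro j _
  exact Measurable.ite (measurableSet_lt (measurable_pi_apply i) (measurable_pi_apply j))
    measurable_const measurable_const

lemma measurable_E_real (i : Fin (n+1)) :
    Measurable (fun x : Fin (n+1) → ℝ => (E x i : ℝ)) := by
  have : (fun x : Fin (n+1) → ℝ => (E x i : ℝ)) =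
      fun x => ∑ j : Fin (n+1), if x j = x i then (1:ℝ) else 0 := by
    funext x
    rw [E, Finset.card_filter]
    push_cast
    rfl
  rw [this]
  apply Finset.measurable_sum
  intro j _
  exact Measurable.ite (measurableSet_eq_fun (measurable_pi_apply j) (measurable_pi_apply i))
    measurable_const measurable_const

lemma measurable_c (s : ℝ) (i : Fin (n+1)) :
    Measurable (fun x : Fin (n+1) → ℝ => c s x i) := by
  apply Measurable.min measurable_const
  apply Measurable.max measurable_const
  exact ((measurable_const.sub (measurable_G_real i)).div (measurable_E_real i))

/-- the key combinatorial fact: for every rank `k ≤ n`, the indices whose tie-class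
covers rank `k` contribute total weight `1` when weighted by the inverse class size. -/
lemma per_k (x : Fin (n+1) → ℝ) (k : ℕ) (hk : k ≤ n) :
    ∑ i : Fin (n+1), (if G x i ≤ k ∧ k < G x i + E x i then ((E x i : ℝ))⁻¹ else 0) = 1 := by
  classical
  set S := Finset.univ.filter (fun i => G x i ≤ k) with hS
  have hSne : S.Nonempty := by
    obtain ⟨j, -, hj⟩ := Finset.exists_max_image Finset.univ x Finset.univ_nonempty
    refine ⟨j, Finset.mem_filter.mpr ⟨Finset.mem_univ _, ?_⟩⟩
    have hG0 : G x j = 0 := by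
      rw [G, Finset.card_eq_zero, Finset.filter_eq_empty_iff]
      intro j' _
      exact not_lt.mpr (hj j' (Finset.mem_univ _))
    omega
  obtain ⟨i₀, hi₀S, hmin⟩ := S.exists_min_image x hSne
  have hGk : G x i₀ ≤ k := (Finset.mem_filter.mp hi₀S).2
  have hkGE : k < G x i₀ + E x i₀ := by
    by_contra hcon
    push_neg at hcon
    rw [G_add_E] at hcon
    by_cases hlow : (Finset.univ.filter fun j => x j < x i₀).Nonempty
    · obtain ⟨j₀, hj₀mem, hj₀max⟩ := Finset.exists_max_image _ x hlow
      have hj₀lt : x j₀ < x i₀ := (Finset.mem_filter.mp hj₀mem).2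
      have hsub : (Finset.univ.filter fun j => x j > x j₀) ⊆
          (Finset.univ.filter fun j => x j ≥ x i₀) := by
        intro j hj
        simp only [Finset.mem_filter, Finset.mem_univ, true_and] at hj ⊢
        by_contra h
        push_neg at h
        have : x j ≤ x j₀ := hj₀max j (Finset.mem_filter.mpr ⟨Finset.mem_univ _, h⟩)
        linarith
      have hj₀k : G x j₀ ≤ k := le_trans (Finset.card_le_card hsub) hcon
      have : x i₀ ≤ x j₀ := hmin j₀ (Finset.mem_filter.mpr ⟨Finset.mem_univ _, hj₀k⟩)
      linarith
    · have huniv : (Finset.univ.filter fun j => x j ≥ x i₀) = Finset.univ := by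
        apply Finset.filter_true_of_mem
        intro j _
        by_contra h
        push_neg at h
        exact hlow ⟨j, Finset.mem_filter.mpr ⟨Finset.mem_univ _, h⟩⟩
      rw [huniv, Finset.card_univ, Fintype.card_fin] at hcon
      omega
  have hcond : ∀ i, (G x i ≤ k ∧ k < G x i + E x i) ↔ x i = x i₀ := by
    intro i
    constructor
    · rintro ⟨h1, h2⟩
      by_contra hne
      rcases lt_or_gt_of_ne hne with hlt | hgt
      · have hsub : (Finset.univ.filter fun j => x j ≥ x i₀) ⊆
            (Finset.univ.filter fun j => x j > x i) := by
          intro j hj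
          simp only [Finset.mem_filter, Finset.mem_univ, true_and] at hj ⊢
          linarith
        have := Finset.card_le_card hsub
        rw [← G_add_E] at this
        rw [← G] at this
        omega
      · have hsub : (Finset.univ.filter fun j => x j ≥ x i) ⊆
            (Finset.univ.filter fun j => x j > x i₀) := by
          intro j hj
          simp only [Finset.mem_filter, Finset.mem_univ, true_and] at hj ⊢
          linarith
        have := Finset.card_le_card hsub
        rw [← G_add_E, ← G] at this
        omega
    · intro h
      have hG : G x i = G x i₀ := by unfold G; simp_rw [h]
      have hE : E x i = E x i₀ := by unfold E; simp_rw [h]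
      rw [hG, hE]
      exact ⟨hGk, hkGE⟩
  have hEeq : ∀ i, x i = x i₀ → E x i = E x i₀ := by
    intro i h; unfold E; simp_rw [h]
  calc ∑ i : Fin (n+1), (if G x i ≤ k ∧ k < G x i + E x i then ((E x i : ℝ))⁻¹ else 0)
      = ∑ i : Fin (n+1), (if x i = x i₀ then ((E x i : ℝ))⁻¹ else 0) := by
        apply Finset.sum_congr rfl
        intro i _
        exact if_congr (hcond i) rfl rfl
    _ = ∑ i ∈ Finset.univ.filter (fun i => x i = x i₀), ((E x i : ℝ))⁻¹ := by
        rw [Finset.sum_filter]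
    _ = ∑ _i ∈ Finset.univ.filter (fun i => x i = x i₀), ((E x i₀ : ℝ))⁻¹ := by
        apply Finset.sum_congr rfl
        intro i hi
        rw [hEeq i (Finset.mem_filter.mp hi).2]
    _ = (E x i₀ : ℝ) * ((E x i₀ : ℝ))⁻¹ := by
        rw [Finset.sum_const, ← E, nsmul_eq_mul]
    _ = 1 := mul_inv_cancel₀ (Nat.cast_ne_zero.mpr (E_pos x i₀).ne')

lemma clamp_add (u m : ℝ) (hm : 0 ≤ m) :
    min m (max 0 u) + min 1 (max 0 (u - m)) = min (m+1) (max 0 u) := by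
  rcases le_total u 0 with h | h
  · rw [max_eq_left h, max_eq_left (by linarith)]
    simp [min_eq_right hm, min_eq_right (by linarith : (0:ℝ) ≤ m+1)]
  · rw [max_eq_right h]
    rcases le_total u m with h1 | h1
    · rw [min_eq_right h1, max_eq_left (by linarith), min_eq_right (by linarith : u ≤ m+1)]
      simp
    · rw [min_eq_left h1, max_eq_right (by linarith)]
      rcases le_total u (m+1) with h2 | h2
      · rw [min_eq_right (by linarith), min_eq_right h2]; ring
      · rw [min_eq_left (by linarith), min_eq_left h2]

lemma sum_clamp (s : ℝ) (a m : ℕ) :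
    ∑ k ∈ Finset.Ico a (a+m), min 1 (max 0 (s - k)) = min (m:ℝ) (max 0 (s - a)) := by
  induction m with
  | zero => simp
  | succ m ih =>
    rw [show a + (m+1) = (a+m) + 1 by ring, Finset.sum_Ico_succ_top (by omega), ih]
    have := clamp_add (s - a) (m : ℝ) (by positivity)
    push_cast
    push_cast at this
    convert this using 3 <;> ring

lemma inv_mul_min (u m : ℝ) (hm : 0 < m) :
    m⁻¹ * min m (max 0 u) = min 1 (max 0 (u / m)) := by
  rcases le_total u 0 with h | h
  · rw [max_eq_left h, max_eq_left (div_nonpos_of_nonpos_of_nonneg h hm.le)]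
    simp [min_eq_right hm.le]
  · rw [max_eq_right h, max_eq_right (by positivity)]
    rcases le_total u m with h1 | h1
    · rw [min_eq_right h1, min_eq_right (by rw [div_le_one hm]; exact h1), inv_mul_eq_div]
    · rw [min_eq_left h1, min_eq_left (by rw [le_div_iff₀ hm]; linarith)]
      exact inv_mul_cancel₀ hm.ne'

/-- the deterministic core: for `0 ≤ s ≤ n+1` the sum over all indices of the
conditional probabilities equals `s`. -/
lemma sum_c (s : ℝ) (x : Fin (n+1) → ℝ) (h0 : 0 ≤ s) (h1 : s ≤ n + 1) :
    ∑ i : Fin (n+1), c s x i = s := by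
  classical
  have hc : ∀ i : Fin (n+1), c s x i = ∑ k ∈ Finset.range (n+1),
      (if k ∈ Finset.Ico (G x i) (G x i + E x i)
        then ((E x i : ℝ))⁻¹ * min 1 (max 0 (s - k)) else 0) := by
    intro i
    have hsub : Finset.Ico (G x i) (G x i + E x i) ⊆ Finset.range (n+1) := by
      intro k hk
      rw [Finset.mem_range]
      have h2 := Finset.mem_Ico.mp hk
      have h3 := G_add_E_le x i
      omega
    rw [Finset.sum_ite_mem, Finset.inter_eq_right.mpr hsub, ← Finset.mul_sum, sum_clamp]
    exact (inv_mul_min (s - G x i) (E x i) (by exact_mod_cast E_pos x i)).symm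
  rw [Finset.sum_congr rfl (fun i _ => hc i), Finset.sum_comm]
  have hinner : ∀ k ∈ Finset.range (n+1),
      (∑ i : Fin (n+1), if k ∈ Finset.Ico (G x i) (G x i + E x i)
        then ((E x i : ℝ))⁻¹ * min 1 (max 0 (s - k)) else 0) = min 1 (max 0 (s - k)) := by
    intro k hk
    have hk' : k ≤ n := by rw [Finset.mem_range] at hk; omega
    have : ∀ i : Fin (n+1), (if k ∈ Finset.Ico (G x i) (G x i + E x i)
        then ((E x i : ℝ))⁻¹ * min 1 (max 0 (s - k)) else 0)
        = min 1 (max 0 (s - k)) *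
          (if G x i ≤ k ∧ k < G x i + E x i then ((E x i : ℝ))⁻¹ else 0) := by
      intro i
      simp only [Finset.mem_Ico]
      split_ifs <;> ring
    rw [Finset.sum_congr rfl (fun i _ => this i), ← Finset.mul_sum, per_k x k hk', mul_one]
  rw [Finset.sum_congr rfl hinner]
  have := sum_clamp s 0 (n+1)
  rw [zero_add, ← Finset.range_eq_Ico] at this
  rw [this]
  push_cast
  rw [sub_zero, max_eq_right h0, min_eq_right (by push_cast; linarith)]

end Stmt17Aux

/-- Exact validity of smoothed conformal p-values: if `(α₁, …, α_{n+1})` is exchangeable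
and `θ` is uniform on `[0,1]` and independent of the `αᵢ`, then the smoothed p-value
`p = (#{i : αᵢ > α_{n+1}} + θ·#{i : αᵢ = α_{n+1}}) / (n+1)` satisfies `P(p ≤ t) = t` for
all `t ∈ [0,1]`. -/
theorem stmt_17 {Ω : Type*} [MeasurableSpace Ω] (μ : Measure Ω) [IsProbabilityMeasure μ]
    (n : ℕ) (α : Fin (n + 1) → Ω → ℝ) (hα : ∀ i, Measurable (α i))
    (hexch : ∀ σ : Equiv.Perm (Fin (n + 1)),
      μ.map (fun ω => fun i => α (σ i) ω) = μ.map (fun ω => fun i => α i ω))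
    (θ : Ω → ℝ) (hθ : Measurable θ)
    (hθ_unif : μ.map θ = volume.restrict (Set.Icc (0 : ℝ) 1))
    (hθ_indep : IndepFun θ (fun ω => fun i => α i ω) μ)
    (pval : Ω → ℝ)
    (hpval : ∀ ω, pval ω =
      ((Finset.univ.filter (fun i => α i ω > α (Fin.last n) ω)).card +
          θ ω * (Finset.univ.filter (fun i => α i ω = α (Fin.last n) ω)).card) / (n + 1)) :
    ∀ t ∈ Set.Icc (0 : ℝ) 1, μ {ω | pval ω ≤ t} = ENNReal.ofReal t := by
  intro t ht
  obtain ⟨ht0, ht1⟩ := ht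
  have hnpos : (0:ℝ) < (n:ℝ) + 1 := by positivity
  set s : ℝ := t * ((n:ℝ) + 1) with hsdef
  have hs0 : 0 ≤ s := by positivity
  have hs1 : s ≤ (n:ℝ) + 1 := by nlinarith
  set A : Ω → (Fin (n+1) → ℝ) := fun ω i => α i ω with hAdef
  have hAmeas : Measurable A := measurable_pi_lambda _ hα
  set ν : Measure (Fin (n+1) → ℝ) := μ.map A with hν
  haveI : IsProbabilityMeasure ν := Measure.isProbabilityMeasure_map hAmeas.aemeasurable
  set L : Fin (n+1) := Fin.last n with hL
  set S : Set ((Fin (n+1) → ℝ) × ℝ) :=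
    {q | (Stmt17Aux.G q.1 L : ℝ) + q.2 * (Stmt17Aux.E q.1 L : ℝ) ≤ s} with hSdef
  have hSmeas : MeasurableSet S := by
    apply measurableSet_le _ measurable_const
    exact ((Stmt17Aux.measurable_G_real L).comp measurable_fst).add
      (measurable_snd.mul ((Stmt17Aux.measurable_E_real L).comp measurable_fst))
  have ecard : ∀ ω, ((Finset.univ.filter (fun i => α i ω > α L ω)).card : ℝ) +
      θ ω * ((Finset.univ.filter (fun i => α i ω = α L ω)).card : ℝ) =
      (Stmt17Aux.G (A ω) L : ℝ) + θ ω * (Stmt17Aux.E (A ω) L : ℝ) := fun ω => rfl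
  have hev : {ω | pval ω ≤ t} = (fun ω => (A ω, θ ω)) ⁻¹' S := by
    ext ω
    simp only [Set.mem_setOf_eq, Set.mem_preimage, hSdef, hpval ω]
    rw [div_le_iff₀ hnpos, ecard ω, hsdef]
  rw [hev, ← Measure.map_apply (hAmeas.prodMk hθ) hSmeas]
  have hpair : μ.map (fun ω => (A ω, θ ω)) = ν.prod (volume.restrict (Set.Icc (0:ℝ) 1)) := by
    rw [hν, ← hθ_unif]
    exact (indepFun_iff_map_prod_eq_prod_map_map hAmeas.aemeasurable hθ.aemeasurable).mp
      hθ_indep.symm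
  rw [hpair, Measure.prod_apply hSmeas]
  have hinner : ∀ x : Fin (n+1) → ℝ, (volume.restrict (Set.Icc (0:ℝ) 1)) (Prod.mk x ⁻¹' S) =
      ENNReal.ofReal (Stmt17Aux.c s x L) := by
    intro x
    have hE : (0:ℝ) < (Stmt17Aux.E x L : ℝ) := by exact_mod_cast Stmt17Aux.E_pos x L
    have hset : Prod.mk x ⁻¹' S =
        Set.Iic ((s - (Stmt17Aux.G x L : ℝ)) / (Stmt17Aux.E x L : ℝ)) := by
      ext u
      simp only [Set.mem_preimage, hSdef, Set.mem_setOf_eq, Set.mem_Iic]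
      rw [le_div_iff₀ hE]
      constructor <;> intro h <;> linarith
    rw [hset, Measure.restrict_apply measurableSet_Iic]
    set q : ℝ := (s - (Stmt17Aux.G x L : ℝ)) / (Stmt17Aux.E x L : ℝ) with hq
    have hIcc : Set.Iic q ∩ Set.Icc (0:ℝ) 1 = Set.Icc 0 (min q 1) := by
      ext y
      simp only [Set.mem_inter_iff, Set.mem_Iic, Set.mem_Icc, le_min_iff]
      tauto
    rw [hIcc, Real.volume_Icc, sub_zero]
    rcases le_total 0 q with h | h
    · rw [min_comm]
      congr 1
      rw [Stmt17Aux.c, max_eq_right h]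
    · have hq0 : min q 1 ≤ 0 := le_trans (min_le_left _ _) h
      rw [ENNReal.ofReal_eq_zero.mpr hq0, Stmt17Aux.c, max_eq_left h,
        min_eq_right (le_refl (0:ℝ) |>.trans zero_le_one), ENNReal.ofReal_zero]
  rw [lintegral_congr hinner]
  have hνperm : ∀ σ : Equiv.Perm (Fin (n+1)), ν.map (fun x => x ∘ σ) = ν := by
    intro σ
    have hcomp : Measurable (fun x : Fin (n+1) → ℝ => x ∘ σ) :=
      measurable_pi_lambda _ (fun j => measurable_pi_apply _)
    rw [hν, Measure.map_map hcomp hAmeas]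
    have he : (fun x : Fin (n+1) → ℝ => x ∘ σ) ∘ A = fun ω => fun i => α (σ i) ω := rfl
    rw [he, hexch σ]
  have hswap : ∀ i : Fin (n+1), ∫⁻ x, ENNReal.ofReal (Stmt17Aux.c s x i) ∂ν
      = ∫⁻ x, ENNReal.ofReal (Stmt17Aux.c s x L) ∂ν := by
    intro i
    have hcomp : Measurable
        (fun x : Fin (n+1) → ℝ => x ∘ (Equiv.swap i L : Equiv.Perm (Fin (n+1)))) :=
      measurable_pi_lambda _ (fun j => measurable_pi_apply _)
    conv_lhs => rw [← hνperm (Equiv.swap i L)]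
    rw [lintegral_map ((Stmt17Aux.measurable_c s i).ennreal_ofReal) hcomp]
    apply lintegral_congr
    intro x
    congr 1
    rw [Stmt17Aux.c_comp, Equiv.swap_apply_left]
  have hsum : ∑ i : Fin (n+1), ∫⁻ x, ENNReal.ofReal (Stmt17Aux.c s x i) ∂ν
      = ENNReal.ofReal s := by
    rw [← lintegral_finset_sum _ (fun i _ => (Stmt17Aux.measurable_c s i).ennreal_ofReal)]
    have hpt : ∀ x : Fin (n+1) → ℝ, (∑ i : Fin (n+1), ENNReal.ofReal (Stmt17Aux.c s x i))
        = ENNReal.ofReal s := by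
      intro x
      rw [← ENNReal.ofReal_sum_of_nonneg (fun i _ => Stmt17Aux.c_nonneg s x i),
        Stmt17Aux.sum_c s x hs0 hs1]
    rw [lintegral_congr hpt, lintegral_const, measure_univ, mul_one]
  rw [Finset.sum_congr rfl (fun i _ => hswap i), Finset.sum_const, Finset.card_univ,
    Fintype.card_fin, nsmul_eq_mul] at hsum
  have hofs : ENNReal.ofReal s = ((n+1 : ℕ) : ENNReal) * ENNReal.ofReal t := by
    rw [hsdef, ENNReal.ofReal_mul ht0, mul_comm]
    congr 1
    rw [show ((n:ℝ) + 1) = ((n+1 : ℕ) : ℝ) by push_cast; ring, ENNReal.ofReal_natCast]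
  rw [hofs] at hsum
  exact (ENNReal.mul_right_inj (by exact_mod_cast (Nat.succ_ne_zero n))
    (ENNReal.natCast_ne_top _)).mp hsum
end
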